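/- arXiv:1309.2782 — 2 statements merged into one kernel-verified Lean document; each statement's English description precedes it below -/
import Mathlib

section
/- Let G be a groupoid with finitely many morphisms, and let M(γ) ∈ Matrix Γ Γ ℂ denote the matrix of the operator D(γ) (left convolution by δ_γ) in the standard (delta-function) basis of Γ → ℂ. Then for all γ₁, γ₂ ∈ Γ: Tr[M(γ₁) * M(γ₂)ᵀ] = 0 if γ₁ ≠ γ₂, and Tr[M(γ) * M(γ)ᵀ] equals the number of morphisms η ∈ Γ whose source is the target of γ (i.e., the number of morphisms composable on the right with γ). In particular, if G is connected (any two objects are joined by a morphism), this number equals (number of objects of G) × (order of the isotropy group of any object), independently of γ. -/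
open CategoryTheory

/-- The convolution product of the groupoid algebra of a finite groupoid `G`, on functions
on the type `Γ = Σ x y : G, x ⟶ y` of all morphisms. -/
noncomputable def groupoidConv {G : Type*} [Groupoid G] [Fintype G] [DecidableEq G]
    [∀ x y : G, Fintype (x ⟶ y)] [∀ x y : G, DecidableEq (x ⟶ y)]
    (f₁ f₂ : (Σ x y : G, x ⟶ y) → ℂ) : (Σ x y : G, x ⟶ y) → ℂ :=
  fun γ => ∑ x : G, ∑ y : G, ∑ z : G, ∑ a : x ⟶ y, ∑ b : y ⟶ z,
    if (⟨x, z, a ≫ b⟩ : Σ x y : G, x ⟶ y) = γ then f₁ ⟨x, y, a⟩ * f₂ ⟨y, z, b⟩ else 0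

/-- The delta (indicator) function of a morphism `γ`. -/
def groupoidDelta {G : Type*} [Groupoid G] [DecidableEq G]
    [∀ x y : G, DecidableEq (x ⟶ y)] (γ : Σ x y : G, x ⟶ y) :
    (Σ x y : G, x ⟶ y) → ℂ :=
  fun η => if η = γ then 1 else 0

theorem groupoidConv_add_right {G : Type*} [Groupoid G] [Fintype G] [DecidableEq G]
    [∀ x y : G, Fintype (x ⟶ y)] [∀ x y : G, DecidableEq (x ⟶ y)]
    (f g₁ g₂ : (Σ x y : G, x ⟶ y) → ℂ) :
    groupoidConv f (g₁ + g₂) = groupoidConv f g₁ + groupoidConv f g₂ := by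
  funext γ
  simp only [groupoidConv, Pi.add_apply, ← Finset.sum_add_distrib]
  refine Finset.sum_congr rfl fun x _ => Finset.sum_congr rfl fun y _ =>
    Finset.sum_congr rfl fun z _ => Finset.sum_congr rfl fun a _ =>
    Finset.sum_congr rfl fun b _ => ?_
  split_ifs <;> ring

theorem groupoidConv_smul_right {G : Type*} [Groupoid G] [Fintype G] [DecidableEq G]
    [∀ x y : G, Fintype (x ⟶ y)] [∀ x y : G, DecidableEq (x ⟶ y)]
    (c : ℂ) (f g : (Σ x y : G, x ⟶ y) → ℂ) :
    groupoidConv f (c • g) = c • groupoidConv f g := by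
  funext γ
  simp only [groupoidConv, Pi.smul_apply, smul_eq_mul, Finset.mul_sum]
  refine Finset.sum_congr rfl fun x _ => Finset.sum_congr rfl fun y _ =>
    Finset.sum_congr rfl fun z _ => Finset.sum_congr rfl fun a _ =>
    Finset.sum_congr rfl fun b _ => ?_
  split_ifs <;> ring

/-- Left convolution by the delta function of `γ`, as a linear operator: `D(γ) f := δ_γ ∗ f`. -/
noncomputable def groupoidD {G : Type*} [Groupoid G] [Fintype G] [DecidableEq G]
    [∀ x y : G, Fintype (x ⟶ y)] [∀ x y : G, DecidableEq (x ⟶ y)]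
    (γ : Σ x y : G, x ⟶ y) :
    ((Σ x y : G, x ⟶ y) → ℂ) →ₗ[ℂ] ((Σ x y : G, x ⟶ y) → ℂ) where
  toFun f := groupoidConv (groupoidDelta γ) f
  map_add' g₁ g₂ := groupoidConv_add_right _ g₁ g₂
  map_smul' c g := groupoidConv_smul_right c _ g

/-- The matrix `M(γ)` of the operator `D(γ)` in the standard (delta-function) basis of the
groupoid algebra. -/
noncomputable def groupoidM {G : Type*} [Groupoid G] [Fintype G] [DecidableEq G]
    [∀ x y : G, Fintype (x ⟶ y)] [∀ x y : G, DecidableEq (x ⟶ y)]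
    (γ : Σ x y : G, x ⟶ y) : Matrix (Σ x y : G, x ⟶ y) (Σ x y : G, x ⟶ y) ℂ :=
  LinearMap.toMatrix (Pi.basisFun ℂ (Σ x y : G, x ⟶ y))
    (Pi.basisFun ℂ (Σ x y : G, x ⟶ y)) (groupoidD γ)

/-!
The column of `M(γ)` indexed by `η` is `δ_{γη}` when `η` starts where `γ` ends, and zero
otherwise. Hence `Tr[M(γ₁) M(γ₂)ᵀ]`, the sum of the dot products of corresponding columns,
counts the `η` composable with both and with `γ₁ ≫ η = γ₂ ≫ η`; right cancellation in a groupoid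
forces `γ₁ = γ₂`. In a connected groupoid every hom-set is in bijection with the isotropy group
of `x₀`, by composing with fixed morphisms into and out of `x₀`.
-/

namespace CategoryTheory.Groupoid

variable {G : Type*} [Groupoid G]

def sigmaComp (γ η : Σ x y : G, x ⟶ y) (h : η.1 = γ.2.1) : Σ x y : G, x ⟶ y :=
  ⟨γ.1, η.2.1, γ.2.2 ≫ eqToHom h.symm ≫ η.2.2⟩

theorem sigmaComp_left_injective {γ₁ γ₂ η : Σ x y : G, x ⟶ y} (h₁ : η.1 = γ₁.2.1)
    (h₂ : η.1 = γ₂.2.1) (h : sigmaComp γ₁ η h₁ = sigmaComp γ₂ η h₂) : γ₁ = γ₂ := by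
  obtain ⟨c₁, d₁, g₁⟩ := γ₁
  obtain ⟨c₂, d₂, g₂⟩ := γ₂
  obtain ⟨u, v, e⟩ := η
  dsimp only at h₁ h₂
  subst h₁ h₂
  simp only [sigmaComp, eqToHom_refl, Category.id_comp, Sigma.mk.inj_iff] at h
  obtain ⟨rfl, h⟩ := h
  simp only [heq_eq_eq, Sigma.mk.inj_iff, true_and, cancel_mono] at h
  rw [h]

theorem sum_sigma_hom {M : Type*} [AddCommMonoid M] [Fintype G] [∀ x y : G, Fintype (x ⟶ y)]
    (F : (Σ x y : G, x ⟶ y) → M) : ∑ x, ∑ y, ∑ a : x ⟶ y, F ⟨x, y, a⟩ = ∑ γ, F γ := by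
  simp only [Fintype.sum_sigma]

theorem card_subtype_fst_eq_sum_card_hom [Fintype G] [DecidableEq G]
    [∀ x y : G, Fintype (x ⟶ y)] (x : G) :
    Fintype.card {η : Σ x y : G, x ⟶ y // η.1 = x} = ∑ y, Fintype.card (x ⟶ y) := by
  rw [Fintype.card_congr (Equiv.sigmaSubtype x), Fintype.card_sigma]

theorem card_hom_eq_of_connected [∀ x y : G, Fintype (x ⟶ y)]
    (hconn : ∀ a b : G, Nonempty (a ⟶ b)) (x y x₀ : G) :
    Fintype.card (x ⟶ y) = Fintype.card (x₀ ⟶ x₀) :=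
  let ⟨p⟩ := hconn x₀ x
  let ⟨q⟩ := hconn y x₀
  Fintype.card_congr (Iso.homCongr (asIso p).symm (asIso q))

end CategoryTheory.Groupoid

section GroupoidAlgebra

open CategoryTheory.Groupoid Matrix

variable {G : Type*} [Groupoid G] [Fintype G] [DecidableEq G]
    [∀ x y : G, Fintype (x ⟶ y)] [∀ x y : G, DecidableEq (x ⟶ y)]

theorem groupoidConv_groupoidDelta_left (γ : Σ x y : G, x ⟶ y) (f : (Σ x y : G, x ⟶ y) → ℂ)
    (ξ : Σ x y : G, x ⟶ y) :
    groupoidConv (groupoidDelta γ) f ξ = ∑ z : G, ∑ b : γ.2.1 ⟶ z,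
      if (⟨γ.1, z, γ.2.2 ≫ b⟩ : Σ x y : G, x ⟶ y) = ξ then f ⟨γ.2.1, z, b⟩ else 0 := by
  have hswap : ∀ x y : G, ∀ F : ∀ z : G, (x ⟶ y) → (y ⟶ z) → ℂ,
      ∑ z, ∑ a, ∑ b, F z a b = ∑ a, ∑ z, ∑ b, F z a b := fun _ _ _ => Finset.sum_comm
  simp only [groupoidConv, hswap]
  rw [sum_sigma_hom fun γ' : Σ x y : G, x ⟶ y => ∑ z : G, ∑ b : γ'.2.1 ⟶ z,
    if (⟨γ'.1, z, γ'.2.2 ≫ b⟩ : Σ x y : G, x ⟶ y) = ξ then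
      groupoidDelta γ γ' * f ⟨γ'.2.1, z, b⟩ else 0]
  rw [Fintype.sum_eq_single γ fun γ' hγ' => by simp [groupoidDelta, hγ']]
  simp [groupoidDelta]

theorem groupoidConv_groupoidDelta (γ η : Σ x y : G, x ⟶ y) :
    groupoidConv (groupoidDelta γ) (groupoidDelta η) =
      if h : η.1 = γ.2.1 then groupoidDelta (sigmaComp γ η h) else 0 := by
  funext ξ
  obtain ⟨c, d, g⟩ := γ
  obtain ⟨u, v, e⟩ := η
  rw [groupoidConv_groupoidDelta_left]
  by_cases h : u = d
  · subst h
    rw [dif_pos rfl, Fintype.sum_eq_single v fun z hz => ?_,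
      Fintype.sum_eq_single e fun b hb => ?_]
    · simp [groupoidDelta, sigmaComp, eq_comm]
    · simp [groupoidDelta, hb]
    · exact Finset.sum_eq_zero fun b _ => by simp [groupoidDelta, hz]
  · rw [dif_neg h]
    exact Finset.sum_eq_zero fun z _ => Finset.sum_eq_zero fun b _ => by
      simp [groupoidDelta, Ne.symm h]

theorem groupoidM_apply (γ ξ η : Σ x y : G, x ⟶ y) :
    groupoidM γ ξ η = if h : η.1 = γ.2.1 then groupoidDelta (sigmaComp γ η h) ξ else 0 := by
  have hbasis : Pi.basisFun ℂ (Σ x y : G, x ⟶ y) η = groupoidDelta η := by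
    funext ξ
    simp [groupoidDelta, Pi.single_apply]
  rw [groupoidM, LinearMap.toMatrix_apply, Pi.basisFun_repr, hbasis]
  simp only [groupoidD, LinearMap.coe_mk, AddHom.coe_mk, groupoidConv_groupoidDelta]
  split_ifs <;> rfl

theorem sum_groupoidDelta_mul_groupoidDelta (γ₁ γ₂ : Σ x y : G, x ⟶ y) :
    ∑ ξ, groupoidDelta γ₁ ξ * groupoidDelta γ₂ ξ = if γ₁ = γ₂ then 1 else 0 := by
  simp only [groupoidDelta, ite_mul, one_mul, zero_mul, Finset.sum_ite_eq', Finset.mem_univ,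
    if_true]

theorem sum_groupoidM_mul_groupoidM (γ₁ γ₂ η : Σ x y : G, x ⟶ y) :
    ∑ ξ, groupoidM γ₁ ξ η * groupoidM γ₂ ξ η = if η.1 = γ₁.2.1 ∧ γ₁ = γ₂ then 1 else 0 := by
  simp only [groupoidM_apply]
  by_cases h₁ : η.1 = γ₁.2.1
  · by_cases h₂ : η.1 = γ₂.2.1
    · simp only [dif_pos h₁, dif_pos h₂, sum_groupoidDelta_mul_groupoidDelta]
      exact if_congr ⟨fun h => ⟨h₁, sigmaComp_left_injective h₁ h₂ h⟩,
        fun ⟨_, h⟩ => by subst h; rfl⟩ rfl rfl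
    · have hne : γ₁ ≠ γ₂ := fun h => h₂ (h ▸ h₁)
      simp only [dif_neg h₂, mul_zero, Finset.sum_const_zero]
      exact (if_neg fun h => hne h.2).symm
  · simp only [dif_neg h₁, zero_mul, Finset.sum_const_zero]
    exact (if_neg fun h => h₁ h.1).symm

theorem trace_groupoidM_mul_transpose (γ₁ γ₂ : Σ x y : G, x ⟶ y) :
    trace (groupoidM γ₁ * (groupoidM γ₂)ᵀ) =
      if γ₁ = γ₂ then (Fintype.card {η : Σ x y : G, x ⟶ y // η.1 = γ₁.2.1} : ℂ) else 0 := by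
  have htrace : trace (groupoidM γ₁ * (groupoidM γ₂)ᵀ) =
      ∑ η, ∑ ξ, groupoidM γ₁ ξ η * groupoidM γ₂ ξ η := by
    rw [Finset.sum_comm]
    rfl
  simp only [htrace, sum_groupoidM_mul_groupoidM, ite_and]
  split_ifs <;> simp [Fintype.card_subtype, Finset.sum_boole]

end GroupoidAlgebra

open Matrix in
/-- For the matrices `M(γ)` of the regular realization in the delta basis:
`Tr[M(γ₁) M(γ₂)ᵀ] = 0` for `γ₁ ≠ γ₂`, while `Tr[M(γ) M(γ)ᵀ]` equals the number of
morphisms whose source is the target of `γ`; if the groupoid is connected, this equals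
(number of objects) × (order of the isotropy group of any object). -/
theorem groupoidM_trace_orthogonality
    {G : Type*} [Groupoid G] [Fintype G] [DecidableEq G]
    [∀ x y : G, Fintype (x ⟶ y)] [∀ x y : G, DecidableEq (x ⟶ y)] :
    (∀ γ₁ γ₂ : Σ x y : G, x ⟶ y, γ₁ ≠ γ₂ →
        Matrix.trace (groupoidM γ₁ * (groupoidM γ₂)ᵀ) = 0) ∧
    (∀ γ : Σ x y : G, x ⟶ y,
        Matrix.trace (groupoidM γ * (groupoidM γ)ᵀ) =
          (Fintype.card {η : Σ x y : G, x ⟶ y // η.1 = γ.2.1} : ℂ)) ∧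
    ((∀ a b : G, Nonempty (a ⟶ b)) →
      ∀ (γ : Σ x y : G, x ⟶ y) (x₀ : G),
        Matrix.trace (groupoidM γ * (groupoidM γ)ᵀ) =
          (Fintype.card G : ℂ) * (Fintype.card (x₀ ⟶ x₀) : ℂ)) := by
  refine ⟨fun γ₁ γ₂ hne => by rw [trace_groupoidM_mul_transpose, if_neg hne],
    fun γ => by rw [trace_groupoidM_mul_transpose, if_pos rfl], fun hconn γ x₀ => ?_⟩
  rw [trace_groupoidM_mul_transpose, if_pos rfl, Groupoid.card_subtype_fst_eq_sum_card_hom,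
    Finset.sum_congr rfl fun y _ => Groupoid.card_hom_eq_of_connected hconn _ y x₀,
    Finset.sum_const, Finset.card_univ, smul_eq_mul]
  norm_cast
end

section
/- For all natural numbers m, n, the integral over ℂ (with respect to the Lebesgue volume measure on ℂ) satisfies ∫_{z ∈ ℂ} conj(z)^m · z^n · exp(−‖z‖²) dz = π · n! if m = n, and = 0 if m ≠ n. (This Gaussian moment identity expresses the resolution of the identity (1/π) ∫ d²z |z⟩⟨z| = 𝕀 for coherent states in the number basis.) -/
/-!
In polar coordinates `z = r e^{iθ}` the integrand splits as `r^{m+n+1} e^{-r²} · e^{i(n-m)θ}`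
(the extra `r` is the Jacobian). The angular integral over a full period vanishes unless
`m = n`, when it is `2π`, and the radial integral is the Gamma integral
`∫₀^∞ r^{2n+1} e^{-r²} dr = Γ(n+1)/2 = n!/2`.
-/

open MeasureTheory Real Set Nat

theorem integral_Ioo_exp_int_mul_mul_I (k : ℤ) :
    ∫ θ in Ioo (-π) π, Complex.exp (k * θ * Complex.I) =
      if k = 0 then (2 * π : ℂ) else 0 := by
  split_ifs with hk
  · simp [hk, volume_real_Ioo_of_le (neg_le_self pi_nonneg)]
    ring
  have hc : (k : ℂ) * Complex.I ≠ 0 := by simp [hk]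
  rw [← integral_Ioc_eq_integral_Ioo, ← intervalIntegral.integral_of_le (neg_le_self pi_nonneg)]
  simp_rw [mul_right_comm _ _ Complex.I]
  rw [integral_exp_mul_complex hc, div_eq_zero_iff, sub_eq_zero]
  left
  calc Complex.exp (k * Complex.I * π)
      = Complex.exp (k * Complex.I * (-π : ℝ)) * Complex.exp (k * (2 * π * Complex.I)) := by
        rw [← Complex.exp_add]; push_cast; ring_nf
    _ = _ := by rw [Complex.exp_int_mul_two_pi_mul_I, mul_one]

theorem integral_Ioi_pow_mul_exp_neg_sq (n : ℕ) :
    ∫ r in Ioi (0 : ℝ), r ^ (2 * n + 1) * Real.exp (-r ^ 2) = n ! / 2 := by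
  have hq : (-1 : ℝ) < (2 * n + 1 : ℕ) := by norm_cast; omega
  calc ∫ r in Ioi (0 : ℝ), r ^ (2 * n + 1) * Real.exp (-r ^ 2)
      = ∫ r in Ioi (0 : ℝ), r ^ ((2 * n + 1 : ℕ) : ℝ) * Real.exp (-r ^ (2 : ℝ)) := by
        simp_rw [rpow_natCast, rpow_two]
    _ = 1 / 2 * Gamma (n + 1) := by
        rw [integral_rpow_mul_exp_neg_rpow two_pos hq]
        push_cast
        ring_nf
    _ = n ! / 2 := by rw [Gamma_nat_eq_factorial]; ring

theorem conj_pow_mul_pow_polarCoord_symm (m n : ℕ) (p : ℝ × ℝ) :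
    (starRingEnd ℂ) (Complex.polarCoord.symm p) ^ m * Complex.polarCoord.symm p ^ n =
      (p.1 : ℂ) ^ (m + n) * Complex.exp (((n - m : ℤ) : ℂ) * p.2 * Complex.I) := by
  have hp : Complex.polarCoord.symm p = p.1 * Complex.exp (p.2 * Complex.I) := by
    rw [Complex.polarCoord_symm_apply, Complex.exp_mul_I, Complex.ofReal_cos, Complex.ofReal_sin]
  rw [hp, map_mul, Complex.conj_ofReal, ← Complex.exp_conj, map_mul, Complex.conj_ofReal,
    Complex.conj_I, mul_pow, mul_pow, ← Complex.exp_nat_mul, ← Complex.exp_nat_mul, pow_add]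
  rw [show ((n - m : ℤ) : ℂ) * p.2 * Complex.I =
      m * (p.2 * -Complex.I) + n * (p.2 * Complex.I) by push_cast; ring, Complex.exp_add]
  ring

theorem integral_conj_pow_mul_pow_mul_radial (m n : ℕ) (g : ℝ → ℂ) :
    ∫ z : ℂ, (starRingEnd ℂ) z ^ m * z ^ n * g ‖z‖ =
      (∫ r in Ioi (0 : ℝ), (r : ℂ) ^ (m + n + 1) * g r) *
        ∫ θ in Ioo (-π) π, Complex.exp (((n - m : ℤ) : ℂ) * θ * Complex.I) := by
  rw [← Complex.integral_comp_polarCoord_symm, polarCoord_target, Measure.volume_eq_prod,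
    ← setIntegral_prod_mul]
  refine setIntegral_congr_fun (measurableSet_Ioi.prod measurableSet_Ioo) fun p hp => ?_
  rw [Complex.real_smul, conj_pow_mul_pow_polarCoord_symm, Complex.norm_polarCoord_symm,
    abs_of_pos hp.1]
  ring

/-- The Gaussian moment identity over ℂ (with its Lebesgue volume measure):
`∫ conj(z)^m · z^n · exp(−‖z‖²) dz = π · n!` if `m = n`, and `0` otherwise.  This
expresses the coherent-state resolution of the identity `(1/π) ∫ d²z |z⟩⟨z| = 𝕀` in the
number basis. -/
theorem integral_conj_pow_mul_pow_mul_gaussian (m n : ℕ) :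
    ∫ z : ℂ, (starRingEnd ℂ) z ^ m * z ^ n * (Real.exp (-‖z‖ ^ 2) : ℂ) =
      if m = n then (Real.pi : ℂ) * (n.factorial : ℂ) else 0 := by
  rw [integral_conj_pow_mul_pow_mul_radial m n fun r => (Real.exp (-r ^ 2) : ℂ),
    integral_Ioo_exp_int_mul_mul_I]
  by_cases h : m = n
  · subst h
    have hrad : ∫ r in Ioi (0 : ℝ), (r : ℂ) ^ (m + m + 1) * (Real.exp (-r ^ 2) : ℂ) =
        ((m ! / 2 : ℝ) : ℂ) := by
      rw [← two_mul, ← integral_Ioi_pow_mul_exp_neg_sq]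
      norm_cast
    rw [hrad, if_pos (sub_self _), if_pos rfl]
    push_cast
    ring
  · rw [if_neg (by omega), if_neg h, mul_zero]
end
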